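/- arXiv:2401.14341 — 9 statements merged into one kernel-verified Lean document; each statement's English description precedes it below -/
import Mathlib

section
/- A binary necklace α is symmetric if and only if there exist palindromes β₁ and β₂ (each possibly empty) such that α = β₁β₂. -/
/-- Concatenation of `t` copies of `γ`. -/
def listPow (γ : List Bool) (t : ℕ) : List Bool := (List.replicate t γ).flatten

/-- A string is a necklace if it is lexicographically minimal among its rotations. -/
def IsNecklace (α : List Bool) : Prop := ∀ k : ℕ, α ≤ α.rotate k

/-- A necklace is symmetric if its reversal is one of its rotations. -/
def IsSymmetric (α : List Bool) : Prop := List.IsRotated α.reverse α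

/-- A string is an asymmetric bracelet if it is a necklace that is lexicographically
strictly smaller than every rotation of its reversal. -/
def IsAsymBracelet (α : List Bool) : Prop :=
  IsNecklace α ∧ ∀ k : ℕ, α < α.reverse.rotate k

/-- `A n`: the set of asymmetric bracelets of length `n`. -/
def A (n : ℕ) : Set (List Bool) := {α | α.length = n ∧ IsAsymBracelet α}

/-- `S n`: all length-`n` strings that are rotations of some asymmetric bracelet. -/
def S (n : ℕ) : Set (List Bool) := {β | ∃ α ∈ A n, List.IsRotated α β}

/-- A string is periodic if it is `γ^j` for some string `γ` and some `j ≥ 2`. -/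
def IsPeriodic (α : List Bool) : Prop := ∃ γ : List Bool, ∃ j : ℕ, 2 ≤ j ∧ listPow γ j = α

/-- `ap α`: the aperiodic prefix, i.e. the shortest `γ` with `α = γ^t`. -/
noncomputable def ap (α : List Bool) : List Bool :=
  α.take (sInf {p | ∃ γ : List Bool, γ.length = p ∧ ∃ t : ℕ, listPow γ t = α})

/-- Flip the first occurrence of the bit `b`. -/
def flipFirst (b : Bool) : List Bool → List Bool
  | [] => []
  | a :: rest => if a = b then (!b) :: rest else a :: flipFirst b rest

/-- Flip the first `1` to a `0`. -/
def firstone (α : List Bool) : List Bool := flipFirst true α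

/-- Flip the last `0` to a `1`. -/
def lastzero (α : List Bool) : List Bool := (flipFirst false α.reverse).reverse

/-- The lexicographically least rotation of `α`. -/
noncomputable def neckOf (α : List Bool) : List Bool :=
  ((List.range (α.length + 1)).map α.rotate).foldr min α

/-- Flip the last bit (a `1`) to `0` and take the lexicographically least rotation. -/
noncomputable def lastone (α : List Bool) : List Bool := neckOf (α.dropLast ++ [false])

/-- Flip the first bit (a `0`) to `1` and take the lexicographically least rotation. -/
noncomputable def firstzero (α : List Bool) : List Bool := neckOf (true :: α.tail)

/-- The root `0^{n-4}1011`. -/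
def rootStr (n : ℕ) : List Bool := List.replicate (n - 4) false ++ [true, false, true, true]

open Classical in
/-- The parent rule. -/
noncomputable def parentStr (n : ℕ) (α : List Bool) : List Bool :=
  if firstone α ∈ A n then firstone α
  else if lastone α ∈ A n then lastone α
  else lastzero α

/-- Cyclic window of length `n` of `o` starting at position `i` (0-indexed). -/
def cycWin (o : List Bool) (n i : ℕ) : List Bool :=
  (List.range n).map fun k => o.getD ((i + k) % o.length) false

/-- `o` is an orientable sequence of order `n`: its forward cyclic windows of length `n`
together with their reversals are `2·|o|` pairwise distinct strings. -/
def IsOS (n : ℕ) (o : List Bool) : Prop :=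
  ∀ i < o.length, ∀ j < o.length,
    (cycWin o n i = cycWin o n j → i = j) ∧ cycWin o n i ≠ (cycWin o n j).reverse

open Classical in
/-- The successor rule `g`. -/
noncomputable def succRule (α : List Bool) : Bool :=
  let n := α.length
  let i := n - α.reverse.idxOf true
  let j := α.tail.idxOf false + 2
  let β₁ := List.replicate (n - i) false ++ true :: α.tail.take (i - 1)
  let β₂ := α.tail ++ [true]
  let β₃ := α.drop (j - 1) ++ false :: List.replicate (j - 2) true
  if (β₁ ∈ A n ∧ firstone β₁ ∈ A n)
      ∨ (β₂ ∈ A n ∧ lastone β₂ ∈ A n ∧ firstone β₂ ∉ A n)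
      ∨ (β₃ ∈ A n ∧ lastzero β₃ ∈ A n ∧ firstone β₃ ∉ A n ∧ lastone β₃ ∉ A n)
  then !α.headD false else α.headD false

/-- The shift map `σ(a₁a₂⋯a_n) = a₂⋯a_n·g(a₁a₂⋯a_n)`. -/
noncomputable def sigmaMap (α : List Bool) : List Bool := α.tail ++ [succRule α]

namespace List

variable {T : Type*}

theorem exists_palindromes_eq_append_of_reverse_isRotated {l : List T} (h : l.reverse ~r l) :
    ∃ l₁ l₂ : List T, l₁.reverse = l₁ ∧ l₂.reverse = l₂ ∧ l = l₁ ++ l₂ := by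
  obtain ⟨n, hn, hrot⟩ := isRotated_iff_mod.mp h
  set u := l.reverse.take n
  set v := l.reverse.drop n
  have hl : l = v ++ u := by rw [← hrot, rotate_eq_drop_append_take hn]
  -- reversing `l = v ++ u` gives `l.reverse = u.reverse ++ v.reverse`, with blocks of equal length
  have hsplit : u ++ v = u.reverse ++ v.reverse := by
    rw [take_append_drop, hl, reverse_append]
  obtain ⟨hu, hv⟩ := append_inj hsplit length_reverse.symm
  exact ⟨v, u, hv.symm, hu.symm, hl⟩

theorem reverse_isRotated_of_palindromes {l₁ l₂ : List T} (h₁ : l₁.reverse = l₁)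
    (h₂ : l₂.reverse = l₂) : (l₁ ++ l₂).reverse ~r l₁ ++ l₂ := by
  rw [reverse_append, h₁, h₂]
  exact isRotated_append

theorem reverse_isRotated_iff_exists_palindromes {l : List T} :
    l.reverse ~r l ↔ ∃ l₁ l₂ : List T, l₁.reverse = l₁ ∧ l₂.reverse = l₂ ∧ l = l₁ ++ l₂ := by
  refine ⟨exists_palindromes_eq_append_of_reverse_isRotated, ?_⟩
  rintro ⟨l₁, l₂, h₁, h₂, rfl⟩
  exact reverse_isRotated_of_palindromes h₁ h₂

end List

theorem symmetric_iff_two_palindromes_general (α : List Bool) :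
    IsSymmetric α ↔
      ∃ β₁ β₂ : List Bool, β₁.reverse = β₁ ∧ β₂.reverse = β₂ ∧ α = β₁ ++ β₂ :=
  List.reverse_isRotated_iff_exists_palindromes

/-- A binary necklace `α` is symmetric if and only if there exist palindromes
`β₁` and `β₂` (each possibly empty) such that `α = β₁β₂`. -/
theorem symmetric_iff_two_palindromes (α : List Bool) (hα : IsNecklace α) :
    IsSymmetric α ↔
      ∃ β₁ β₂ : List Bool, β₁.reverse = β₁ ∧ β₂.reverse = β₂ ∧ α = β₁ ++ β₂ :=
  symmetric_iff_two_palindromes_general α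
end

section
/- Let s ≥ 1 and let α = 0^s·β be a symmetric necklace such that the string β begins with 1, ends with 1, and does not contain 0^s as a substring. Then β is a palindrome. -/
/-!
The reversal of `0^s β` is `β^R 0^s`, a rotation of `0^s β^R`; so cutting `0^s β` into `u v` gives
`v u = 0^s β^R`. If the cut lies inside the block `0^s`, then `β 0^j = 0^j β^R` with `j = |u|`, and
since `β` starts with `1` this forces `j = 0`. If it lies inside `β`, then `0^s` is a prefix of
`v 0^s` with `v` a suffix of `β`: either `0^s` occurs in `β`, or `v` consists of zeros, which
(as `β` ends with `1`) forces `v = []`. Either way the cut is trivial and `β^R = β`.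
-/

namespace List

variable {α : Type*} {l l' : List α}

theorem IsRotated.exists_append (h : l ~r l') : ∃ u v, l = u ++ v ∧ l' = v ++ u := by
  obtain ⟨n, rfl⟩ := h
  exact ⟨_, _, (take_append_drop _ l).symm, rotate_eq_drop_append_take_mod⟩

variable {a : α} {β γ : List α}

theorem eq_of_append_replicate_eq_replicate_append {j : ℕ} (hhead : β.head? ≠ some a)
    (h : β ++ replicate j a = replicate j a ++ γ) : γ = β := by
  match β, j with
  | [], _ => simpa using h
  | _, 0 => simpa using h.symm
  | b :: _, _ + 1 => simp_all [replicate_succ]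

theorem eq_of_append_replicate_append_eq_replicate_append {s : ℕ} {v : List α}
    (hlast : (β ++ v).getLast? ≠ some a) (hfree : ¬ replicate s a <:+: β ++ v)
    (h : v ++ replicate s a ++ β = replicate s a ++ γ) : γ = β ++ v := by
  have hrep : replicate s a <+: v ++ replicate s a ++ β := ⟨γ, h.symm⟩
  rcases prefix_or_prefix_of_prefix hrep ((prefix_append v _).trans (prefix_append _ β)) with
    hv | hv
  · exact absurd (hv.isInfix.trans (suffix_append β v).isInfix) hfree
  · obtain ⟨-, hv⟩ := prefix_replicate_iff.1 hv
    rcases Nat.eq_zero_or_pos v.length with h0 | hpos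
    · rw [length_eq_zero_iff.1 h0] at h ⊢
      simpa using h.symm
    · rw [hv, getLast?_append, getLast?_replicate, if_neg hpos.ne'] at hlast
      exact (hlast rfl).elim

theorem eq_of_replicate_append_isRotated {s : ℕ} (hhead : β.head? ≠ some a)
    (hlast : β.getLast? ≠ some a) (hfree : ¬ replicate s a <:+: β)
    (h : replicate s a ++ β ~r replicate s a ++ γ) : γ = β := by
  obtain ⟨u, v, hcut, hswap⟩ := h.exists_append
  rcases append_eq_append_iff.1 hcut with ⟨β₁, rfl, rfl⟩ | ⟨m, hblock, rfl⟩
  · exact eq_of_append_replicate_append_eq_replicate_append hlast hfree (by simpa using hswap.symm)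
  · obtain ⟨-, hu, hm⟩ := append_eq_replicate_iff.1 hblock.symm
    refine eq_of_append_replicate_eq_replicate_append (j := u.length) hhead ?_
    rw [hblock, hu, hm, replicate_append_replicate, Nat.add_comm,
      ← replicate_append_replicate, append_assoc, append_assoc] at hswap
    exact (append_cancel_left hswap).symm

end List

theorem palindrome_of_symmetric_necklace_general (s : ℕ) (β : List Bool)
    (hhead : β.head? = some true) (hlast : β.getLast? = some true)
    (hnosub : ¬ List.replicate s false <:+: β)
    (hsym : IsSymmetric (List.replicate s false ++ β)) :
    β.reverse = β := by
  have hrot : List.replicate s false ++ β ~r List.replicate s false ++ β.reverse := by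
    refine hsym.symm.trans ?_
    rw [List.reverse_append, List.reverse_replicate]
    exact List.isRotated_append
  exact List.eq_of_replicate_append_isRotated (by simp [hhead]) (by simp [hlast]) hnosub hrot

/-- If `s ≥ 1` and `α = 0^s·β` is a symmetric necklace where `β` begins
with `1`, ends with `1`, and does not contain `0^s` as a substring, then `β` is a palindrome. -/
theorem palindrome_of_symmetric_necklace (s : ℕ) (hs : 1 ≤ s) (β : List Bool)
    (hhead : β.head? = some true) (hlast : β.getLast? = some true)
    (hnosub : ¬ List.replicate s false <:+: β)
    (hneck : IsNecklace (List.replicate s false ++ β))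
    (hsym : IsSymmetric (List.replicate s false ++ β)) :
    β.reverse = β :=
  palindrome_of_symmetric_necklace_general s β hhead hlast hnosub hsym
end

section
/- For every n ≥ 6, the string 0^{n−4}1011 is an asymmetric bracelet of length n; moreover it is the lexicographically smallest element of A(n), and it is the unique element of A(n) having 0^{n−4} as a prefix. -/
/-! Write `n = s + 4` and `ρ = 0^s 1011`. Every nontrivial rotation of `ρ`, and every rotation
of `ρ^R = 1101 0^s` except `0^s 1101`, begins with fewer than `s` zeros followed by a `1`
(here `s ≥ 2` is needed), so it is larger than `ρ`; and `0^s 1011 < 0^s 1101`.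

Conversely, if `0^m v` is asymmetric, comparing it with the rotation `0^m v^R` of its reversal
gives `v < v^R`. For `α = 0^s w ∈ A(n)` this applies to every suffix of `w` obtained by
stripping leading zeros, which among the sixteen words of length 4 leaves only `w = 1011`.
An element of `A(n)` not starting with `0^s` is larger than `ρ`. -/

namespace List

variable {α : Type*}

theorem lt_of_append_lt_append_left [LT α] [Std.Irrefl (· < · : α → α → Prop)]
    {p u v : List α} (h : p ++ u < p ++ v) : u < v := by
  induction p with
  | nil => exact h
  | cons a p ih => exact ih (cons_lt_cons_self.mp h)

theorem forall_rotate_of_forall_lt_length {P : List α → Prop} {l : List α} (hl : l ≠ [])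
    (h : ∀ k < l.length, P (l.rotate k)) (k : ℕ) : P (l.rotate k) := by
  rw [← rotate_mod]
  exact h _ (Nat.mod_lt _ (length_pos_iff.mpr hl))

theorem rotate_append_of_le_length {l₁ l₂ : List α} {k : ℕ} (hk : k ≤ l₁.length) :
    (l₁ ++ l₂).rotate k = l₁.drop k ++ l₂ ++ l₁.take k := by
  rw [rotate_eq_drop_append_take (by simp; omega), drop_append_of_le_length hk,
    take_append_of_le_length hk]

theorem rotate_append_length_add {l₁ l₂ : List α} {j : ℕ} (hj : j ≤ l₂.length) :
    (l₁ ++ l₂).rotate (l₁.length + j) = l₂.drop j ++ l₁ ++ l₂.take j := by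
  rw [← rotate_rotate, rotate_append_length_eq, rotate_append_of_le_length hj]

theorem rotate_reverse_replicate_append (m : ℕ) (a : α) (v : List α) :
    (replicate m a ++ v).reverse.rotate v.length = replicate m a ++ v.reverse := by
  rw [reverse_append, reverse_replicate, ← length_reverse, rotate_append_length_eq]

theorem replicate_append_cons_lt [LT α] {x y : α} (hxy : x < y) {a b : ℕ} (hab : a < b)
    (u v : List α) : replicate b x ++ y :: v < replicate a x ++ y :: u := by
  obtain ⟨c, rfl⟩ : ∃ c, b = a + (c + 1) := ⟨b - a - 1, by omega⟩
  rw [replicate_add, append_assoc]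
  exact append_left_lt (Lex.rel hxy)

theorem replicate_false_append_lt_of_not_prefix {s : ℕ} {l : List Bool} (hl : s ≤ l.length)
    (h : ¬ replicate s false <+: l) (β : List Bool) : replicate s false ++ β < l := by
  induction s generalizing l with
  | zero => exact absurd nil_prefix h
  | succ s ih =>
    obtain _ | ⟨_ | _, l⟩ := l
    · simp at hl
    · refine Lex.cons (ih (by simpa using hl) fun hp => h ?_)
      exact cons_prefix_cons.mpr ⟨rfl, hp⟩
    · exact Lex.rel rfl

end List

open List

theorem rootStr_add_four (s : ℕ) :
    rootStr (s + 4) = replicate s false ++ [true, false, true, true] := by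
  rw [rootStr, Nat.add_sub_cancel]

theorem isNecklace_rootStr {s : ℕ} (hs : 2 ≤ s) : IsNecklace (rootStr (s + 4)) := by
  refine forall_rotate_of_forall_lt_length (by simp [rootStr]) fun k hk => ?_
  rw [rootStr_add_four] at hk ⊢
  rcases Nat.lt_or_ge s k with hsk | hks
  · obtain ⟨j, rfl⟩ : ∃ j, k = (replicate s false).length + j := ⟨k - s, by simp; omega⟩
    obtain ⟨hj0, hj⟩ : 0 < j ∧ j < 4 := by simp at hk hsk; omega
    rw [rotate_append_length_add (by simp; omega)]
    interval_cases j
    · exact (replicate_append_cons_lt rfl (a := 1) (by omega) _ _).le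
    · exact (replicate_append_cons_lt rfl (a := 0) (by omega) _ _).le
    · exact (replicate_append_cons_lt rfl (a := 0) (by omega) _ _).le
  · rcases Nat.eq_zero_or_pos k with rfl | hk0
    · exact (rotate_zero _).ge
    rw [rotate_append_of_le_length (by simpa using hks), drop_replicate, take_replicate,
      append_assoc]
    exact (replicate_append_cons_lt rfl (by omega : s - k < s) _ _).le

theorem rootStr_lt_rotate_reverse {s : ℕ} (hs : 2 ≤ s) :
    ∀ k, rootStr (s + 4) < (rootStr (s + 4)).reverse.rotate k := by
  have hrev : (rootStr (s + 4)).reverse = [true, true, false, true] ++ replicate s false := by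
    simp [rootStr_add_four]
  refine forall_rotate_of_forall_lt_length (P := (rootStr (s + 4) < ·)) (by simp [hrev])
    fun k hk => ?_
  rw [hrev] at hk ⊢
  rw [rootStr_add_four]
  rcases Nat.lt_or_ge k 4 with hk4 | hk4
  · rw [rotate_append_of_le_length (by simp; omega)]
    interval_cases k
    · exact replicate_append_cons_lt rfl (a := 0) (by omega) _ _
    · exact replicate_append_cons_lt rfl (a := 0) (by omega) _ _
    · exact replicate_append_cons_lt rfl (a := 1) (by omega) _ _
    · exact replicate_append_cons_lt rfl (a := 0) (by omega) _ _
  obtain ⟨j, rfl⟩ : ∃ j, k = [true, true, false, true].length + j := ⟨k - 4, by simp; omega⟩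
  have hj : j < s := by simp at hk; omega
  rw [rotate_append_length_add (by simp; omega), drop_replicate, take_replicate, append_assoc]
  rcases Nat.eq_zero_or_pos j with rfl | hj0
  · exact append_left_lt (Lex.cons (Lex.rel rfl))
  · exact replicate_append_cons_lt rfl (by omega : s - j < s) _ _

theorem rootStr_mem_A {s : ℕ} (hs : 2 ≤ s) : rootStr (s + 4) ∈ A (s + 4) :=
  ⟨by simp [rootStr], isNecklace_rootStr hs, rootStr_lt_rotate_reverse hs⟩

theorem eq_of_forall_drop_lt_reverse {w : List Bool} (hw : w.length = 4)
    (h : ∀ t ≤ 4, w.take t = replicate t false → w.drop t < (w.drop t).reverse) :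
    w = [true, false, true, true] := by
  obtain ⟨a, b, c, d, rfl⟩ := length_eq_four.mp hw
  revert h
  revert a b c d
  decide

theorem eq_rootStr_of_mem_A {s : ℕ} {α : List Bool} (hα : α ∈ A (s + 4))
    (hpre : replicate s false <+: α) : α = rootStr (s + 4) := by
  obtain ⟨hlen, -, hasym⟩ := hα
  obtain ⟨w, rfl⟩ := hpre
  rw [rootStr_add_four,
    eq_of_forall_drop_lt_reverse (w := w) (by simpa using hlen) fun t _ ht => ?_]
  have hsplit : replicate s false ++ w = replicate (s + t) false ++ w.drop t := by
    rw [replicate_add, append_assoc, ← ht, take_append_drop]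
  have h := hasym (w.drop t).length
  rw [hsplit, rotate_reverse_replicate_append] at h
  exact lt_of_append_lt_append_left h

theorem rootStr_le_of_mem_A {s : ℕ} {α : List Bool} (hα : α ∈ A (s + 4)) :
    rootStr (s + 4) ≤ α := by
  by_cases hpre : replicate s false <+: α
  · exact (eq_rootStr_of_mem_A hα hpre).ge
  · rw [rootStr_add_four]
    exact (replicate_false_append_lt_of_not_prefix (by rw [hα.1]; omega) hpre _).le

/-- For `n ≥ 6`, the string `0^{n-4}1011` is an asymmetric bracelet of
length `n`; it is the lexicographically smallest element of `A n`, and it is the unique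
element of `A n` having `0^{n-4}` as a prefix. -/
theorem rootStr_mem_A_smallest_unique (n : ℕ) (hn : 6 ≤ n) :
    rootStr n ∈ A n ∧
      (∀ α ∈ A n, rootStr n ≤ α) ∧
      (∀ α ∈ A n, List.replicate (n - 4) false <+: α → α = rootStr n) := by
  obtain ⟨s, rfl⟩ : ∃ s, n = s + 4 := ⟨n - 4, by omega⟩
  rw [Nat.add_sub_cancel]
  exact ⟨rootStr_mem_A (by omega), fun α hα => rootStr_le_of_mem_A hα,
    fun α hα => eq_rootStr_of_mem_A hα⟩
end

section
/- Every asymmetric bracelet of length n contains at least three 1s and at least three 0s; that is, its weight w (number of 1s) satisfies 3 ≤ w ≤ n − 3. -/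
/-! If a bit occurs at most twice in a cyclic string, the string can be cut into two palindromes,
so its reversal is one of its rotations; an asymmetric bracelet is strictly smaller than every
rotation of its reversal, hence each bit occurs in it at least three times. -/

namespace List

theorem reverse_eq_self_of_not_mem {b : Bool} {l : List Bool} (h : b ∉ l) : l.reverse = l := by
  have hl : l = replicate l.length (!b) :=
    eq_replicate_of_mem fun a ha => by cases a <;> cases b <;> simp_all
  rw [hl, reverse_replicate]

theorem reverse_isRotated_of_reverse_eq_self_append {α : Type*} {x y : List α}
    (hx : x.reverse = x) (hy : y.reverse = y) : (x ++ y).reverse ~r x ++ y := by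
  rw [reverse_append, hx, hy]
  exact isRotated_append

theorem IsRotated.reverse_isRotated_self {α : Type*} {l l' : List α} (h : l ~r l')
    (h' : l'.reverse ~r l') : l.reverse ~r l :=
  (h.reverse.trans h').trans h.symm

theorem exists_isRotated_cons_of_mem {α : Type*} {a : α} {l : List α} (h : a ∈ l) :
    ∃ t, l ~r a :: t := by
  obtain ⟨s, t, rfl⟩ := append_of_mem h
  exact ⟨t ++ s, isRotated_append.trans (by rw [cons_append])⟩

/-- Rotating one occurrence of `b` to the front splits the string into the two palindromes
`b c^p b` (or `b`) and `c^q`, where `c = !b`. -/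
theorem reverse_isRotated_of_count_le_two {b : Bool} {l : List Bool} (h : l.count b ≤ 2) :
    l.reverse ~r l := by
  by_cases hb : b ∉ l
  · rw [reverse_eq_self_of_not_mem hb]
  obtain ⟨t, hlt⟩ := exists_isRotated_cons_of_mem (not_not.mp hb)
  refine hlt.reverse_isRotated_self ?_
  have ht : t.count b ≤ 1 := by
    have := hlt.perm.count_eq b
    rw [count_cons_self] at this
    omega
  by_cases hbt : b ∈ t
  · obtain ⟨q, r, rfl⟩ := append_of_mem hbt
    have hqr : q.count b = 0 ∧ r.count b = 0 := by
      simp only [count_append, count_cons_self] at ht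
      omega
    have hq := count_eq_zero.mp hqr.1
    have hr := count_eq_zero.mp hqr.2
    have hsplit : b :: (q ++ b :: r) = (b :: q ++ [b]) ++ r := by simp
    rw [hsplit]
    exact reverse_isRotated_of_reverse_eq_self_append
      (by simp [reverse_eq_self_of_not_mem hq]) (reverse_eq_self_of_not_mem hr)
  · exact reverse_isRotated_of_reverse_eq_self_append (x := [b]) rfl
      (reverse_eq_self_of_not_mem hbt)

end List

theorem IsAsymBracelet.three_le_count {α : List Bool} (hα : IsAsymBracelet α) (b : Bool) :
    3 ≤ α.count b := by
  by_contra h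
  obtain ⟨k, hk⟩ := List.reverse_isRotated_of_count_le_two (b := b) (l := α) (by omega)
  exact (hα.2 k).ne' hk

/-- Every asymmetric bracelet of length `n` contains at least three `1`s and
at least three `0`s; that is, its weight `w` satisfies `3 ≤ w ≤ n - 3`. -/
theorem asymBracelet_weight_bounds (n : ℕ) (α : List Bool) (hα : α ∈ A n) :
    3 ≤ α.count true ∧ 3 ≤ α.count false ∧ α.count true + 3 ≤ n := by
  obtain ⟨rfl, hα⟩ := hα
  have hzeros := hα.three_le_count false
  refine ⟨hα.three_le_count true, hzeros, ?_⟩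
  rw [← List.count_true_add_count_false]
  omega
end

section
/- Let n ≥ 6 and let r_n = 0^{n−4}1011. For every α ∈ A(n) with α ≠ r_n, the string parent(α) is aperiodic. (Consequently, every periodic element of A(n) is a leaf of the cycle-joining tree induced by the parent rule.) -/
/-!
Each candidate parent `β` is `α` with one bit flipped (up to rotation, for `lastone`). If `β`
had a period `m ≤ n / 2`, the unflipped bits of `α` would repeat with period `m` too, and
shifting `α` by a suitable amount (`m` for `firstone`, `m - 1` for `lastone`, a multiple of `m`
for `lastzero`) would produce a rotation agreeing with `α` up to the position of a `1` of `α`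
where the rotation has a `0`: a rotation smaller than `α`, contradicting that `α` is a necklace.
The degenerate cases (`β = 0^n`, or `α = 01^{n-1}` for `lastzero`) are excluded because
asymmetric bracelets are neither constant nor symmetric.
-/

namespace List

def cyclicGet (l : List Bool) (i : ℕ) : Bool := l.getD (i % l.length) false

theorem cyclicGet_of_lt {l : List Bool} {i : ℕ} (h : i < l.length) :
    l.cyclicGet i = l[i] := by
  rw [cyclicGet, Nat.mod_eq_of_lt h, getD_eq_getElem]

theorem cyclicGet_periodic (l : List Bool) : Function.Periodic l.cyclicGet l.length := by
  intro i
  simp [cyclicGet]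

theorem cyclicGet_rotate (l : List Bool) (k i : ℕ) :
    (l.rotate k).cyclicGet i = l.cyclicGet (i + k) := by
  rcases eq_or_ne l [] with rfl | hl
  · simp [cyclicGet]
  have hpos : 0 < l.length := length_pos_iff.2 hl
  rw [cyclicGet, cyclicGet, length_rotate,
    getD_eq_getElem _ _ (by rw [length_rotate]; exact Nat.mod_lt _ hpos), getElem_rotate,
    getD_eq_getElem _ _ (Nat.mod_lt _ hpos)]
  simp only [Nat.mod_add_mod]

theorem IsRotated.periodic_cyclicGet {l l' : List Bool} (h : l ~r l') {m : ℕ}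
    (hm : Function.Periodic l.cyclicGet m) : Function.Periodic l'.cyclicGet m := by
  obtain ⟨k, rfl⟩ := h
  exact fun i => by simpa only [cyclicGet_rotate] using hm.add_const k i

theorem cyclicGet_set {l : List Bool} {s i : ℕ} (hi : i < l.length) (b : Bool) :
    (l.set s b).cyclicGet i = if s = i then b else l.cyclicGet i := by
  rw [cyclicGet_of_lt (by rwa [length_set]), getElem_set, cyclicGet_of_lt hi]

theorem true_mem_of_cyclicGet_eq_true {l : List Bool} {i : ℕ} (h : l.cyclicGet i = true) :
    true ∈ l := by
  rcases eq_or_ne l [] with rfl | hl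
  · simp [cyclicGet] at h
  rw [cyclicGet, getD_eq_getElem _ _ (Nat.mod_lt _ (length_pos_iff.2 hl))] at h
  exact h ▸ getElem_mem _

theorem foldr_min_eq_or_mem {α : Type*} [LinearOrder α] (l : List α) (a : α) :
    l.foldr min a = a ∨ l.foldr min a ∈ l := by
  induction l with
  | nil => exact Or.inl rfl
  | cons x xs ih =>
    rw [foldr_cons]
    rcases min_choice x (xs.foldr min a) with h | h <;> rw [h]
    · exact Or.inr mem_cons_self
    · exact ih.imp_right (mem_cons_of_mem x)

theorem reverse_set_reverse {α : Type*} (l : List α) {q : ℕ} (hq : q < l.length) (b : α) :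
    (l.reverse.set q b).reverse = l.set (l.length - 1 - q) b := by
  refine ext_getElem (by simp) fun i h₁ h₂ => ?_
  simp only [length_set, length_reverse] at h₁ h₂
  simp only [getElem_reverse, getElem_set, length_set, length_reverse]
  split_ifs <;> first | rfl | omega | (congr 1; omega)

theorem dropLast_append_singleton_eq_set {α : Type*} {l : List α} (h : l ≠ []) (b : α) :
    l.dropLast ++ [b] = l.set (l.length - 1) b := by
  conv_rhs => rw [← dropLast_append_getLast h]
  simp

end List

theorem Function.Periodic.exists_first_true_lt {f : ℕ → Bool} {m : ℕ}
    (hf : Function.Periodic f m) (hm : 0 < m) (h : ∃ i, f i = true) :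
    ∃ a < m, f a = true ∧ ∀ j < a, f j = false := by
  obtain ⟨i, hi⟩ := h
  have hex : ∃ a, f a = true := ⟨i % m, by rwa [hf.map_mod_nat]⟩
  refine ⟨Nat.find hex, ?_, Nat.find_spec hex, fun j hj => by simpa using Nat.find_min hex hj⟩
  exact lt_of_le_of_lt (Nat.find_min' hex (by rwa [hf.map_mod_nat])) (Nat.mod_lt i hm)

open List

theorem exists_neckOf_eq_rotate (w : List Bool) : ∃ k, neckOf w = w.rotate k := by
  rcases foldr_min_eq_or_mem ((range (w.length + 1)).map w.rotate) w with h | h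
  · exact ⟨0, by rw [neckOf, h, rotate_zero]⟩
  · obtain ⟨k, -, hk⟩ := mem_map.1 h
    exact ⟨k, hk.symm⟩

theorem flipFirst_eq_self {b : Bool} : ∀ {l : List Bool}, b ∉ l → flipFirst b l = l
  | [], _ => rfl
  | a :: rest, hb => by
    rw [mem_cons, not_or] at hb
    simp [flipFirst, Ne.symm hb.1, flipFirst_eq_self hb.2]

theorem exists_flipFirst_eq_set (b : Bool) :
    ∀ {l : List Bool}, b ∈ l → ∃ s, ∃ hs : s < l.length,
      (∀ j (hj : j < s), l[j] = !b) ∧ l[s] = b ∧ flipFirst b l = l.set s (!b)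
  | a :: rest, hb => by
    by_cases hab : a = b
    · subst hab
      exact ⟨0, by simp, by simp, by simp, by simp [flipFirst]⟩
    · obtain ⟨s, hs, hpre, hsb, hflip⟩ :=
        exists_flipFirst_eq_set b ((mem_cons.1 hb).resolve_left (Ne.symm hab))
      refine ⟨s + 1, by simpa using hs, fun j hj => ?_, by simpa using hsb, ?_⟩
      · cases j with
        | zero => cases a <;> cases b <;> simp_all
        | succ j => simpa using hpre j (by omega)
      · simp [flipFirst, hab, hflip]

theorem exists_firstone_eq_set {α : List Bool} (h : true ∈ α) :
    ∃ s, ∃ hs : s < α.length,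
      (∀ j (hj : j < s), α[j] = false) ∧ α[s] = true ∧ firstone α = α.set s false :=
  exists_flipFirst_eq_set true h

theorem exists_lastzero_eq_set {α : List Bool} (h : false ∈ α) :
    ∃ p, ∃ hp : p < α.length,
      (∀ i, p < i → ∀ hi : i < α.length, α[i] = true) ∧ α[p] = false ∧
        lastzero α = α.set p true := by
  obtain ⟨q, hq, hpre, hqv, hflip⟩ := exists_flipFirst_eq_set false (mem_reverse.2 h)
  rw [length_reverse] at hq
  refine ⟨α.length - 1 - q, by omega, fun i hpi hi => ?_, ?_, ?_⟩
  · simpa [getElem_reverse, show α.length - 1 - (α.length - 1 - i) = i by omega] using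
      hpre (α.length - 1 - i) (by omega)
  · simpa [getElem_reverse] using hqv
  · rw [lastzero, hflip, reverse_set_reverse α hq]; rfl

theorem exists_lastone_eq_rotate_set {α : List Bool} (h : α ≠ []) :
    ∃ k, lastone α = (α.set (α.length - 1) false).rotate k := by
  rw [lastone, dropLast_append_singleton_eq_set h]
  exact exists_neckOf_eq_rotate _

theorem length_listPow (γ : List Bool) (t : ℕ) : (listPow γ t).length = t * γ.length := by
  simp [listPow, sum_replicate]

theorem getD_listPow (γ : List Bool) :
    ∀ (t : ℕ) {i : ℕ}, i < t * γ.length → (listPow γ t).getD i false = γ.getD (i % γ.length) false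
  | 0, i, hi => by simp at hi
  | t + 1, i, hi => by
    have hsucc : listPow γ (t + 1) = γ ++ listPow γ t := by simp [listPow, replicate_succ]
    rw [hsucc]
    by_cases hiγ : i < γ.length
    · rw [getD_append _ _ _ _ hiγ, Nat.mod_eq_of_lt hiγ]
    · rw [not_lt] at hiγ
      rw [getD_append_right _ _ _ _ hiγ, getD_listPow γ t (by rw [Nat.succ_mul] at hi; omega),
        ← Nat.mod_eq_sub_mod hiγ]

theorem cyclicGet_listPow (γ : List Bool) {t : ℕ} (ht : 0 < t) :
    (listPow γ t).cyclicGet = γ.cyclicGet := by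
  funext i
  rcases eq_or_ne γ [] with rfl | hγ
  · simp [cyclicGet, listPow]
  have hpos : 0 < γ.length := length_pos_iff.2 hγ
  rw [cyclicGet, cyclicGet, length_listPow,
    getD_listPow γ t (Nat.mod_lt _ (Nat.mul_pos ht hpos)),
    Nat.mod_mod_of_dvd _ (dvd_mul_left _ _)]

theorem IsPeriodic.exists_period {β : List Bool} (h : IsPeriodic β) (hβ : β ≠ []) :
    ∃ m, 0 < m ∧ 2 * m ≤ β.length ∧ Function.Periodic β.cyclicGet m := by
  obtain ⟨γ, j, hj, rfl⟩ := h
  have hγ : γ ≠ [] := by rintro rfl; simp [listPow] at hβ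
  refine ⟨γ.length, length_pos_iff.2 hγ, ?_, ?_⟩
  · rw [length_listPow]; exact Nat.mul_le_mul_right _ hj
  · rw [cyclicGet_listPow γ (by omega)]; exact cyclicGet_periodic γ

theorem IsNecklace.cyclicGet_le_add {α : List Bool} (hα : IsNecklace α) {i : ℕ}
    (hi : i < α.length) (k : ℕ) (hagree : ∀ j < i, α.cyclicGet (j + k) = α.cyclicGet j) :
    α.cyclicGet i ≤ α.cyclicGet (i + k) := by
  by_contra! hlt
  refine absurd (hα k) (not_le.2 (List.lt_iff_exists.2 (Or.inr ⟨i, by simpa using hi, hi, ?_⟩)))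
  refine ⟨fun j hj => ?_, ?_⟩
  · rw [← cyclicGet_of_lt, ← cyclicGet_of_lt, cyclicGet_rotate, hagree j hj]
  · rwa [← cyclicGet_of_lt, ← cyclicGet_of_lt, cyclicGet_rotate]

theorem IsNecklace.cyclicGet_zero_le {α : List Bool} (hα : IsNecklace α) (hne : α ≠ [])
    (k : ℕ) : α.cyclicGet 0 ≤ α.cyclicGet k := by
  simpa using hα.cyclicGet_le_add (length_pos_iff.2 hne) k (by simp)

theorem IsAsymBracelet.not_isSymmetric {α : List Bool} (h : IsAsymBracelet α) :
    ¬ IsSymmetric α := by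
  rintro ⟨k, hk⟩
  exact lt_irrefl α (by simpa only [hk] using h.2 k)

theorem IsAsymBracelet.exists_cyclicGet_eq {α : List Bool} (h : IsAsymBracelet α) (b : Bool) :
    ∃ i < α.length, α.cyclicGet i = b := by
  by_contra! hne
  apply h.not_isSymmetric
  have hα : α = replicate α.length (!b) := by
    refine ext_getElem (by simp) fun i hi _ => ?_
    rw [getElem_replicate, ← cyclicGet_of_lt hi]
    simpa only [Bool.eq_not_iff] using hne i hi
  rw [IsSymmetric, hα, reverse_replicate]

theorem IsAsymBracelet.ne_nil {α : List Bool} (h : IsAsymBracelet α) : α ≠ [] := by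
  obtain ⟨i, hi, -⟩ := h.exists_cyclicGet_eq true
  exact ne_nil_of_length_pos (by omega)

theorem IsAsymBracelet.ne_false_cons_replicate_true {α : List Bool} (h : IsAsymBracelet α)
    (k : ℕ) : α ≠ false :: replicate k true := by
  rintro rfl
  apply h.not_isSymmetric
  rw [IsSymmetric, reverse_cons, reverse_replicate]
  exact isRotated_append

theorem not_isPeriodic_firstone {α : List Bool} (hα : IsNecklace α)
    (hβ : IsAsymBracelet (firstone α)) : ¬ IsPeriodic (firstone α) := by
  intro hper
  obtain ⟨i₁, -, hi₁⟩ := hβ.exists_cyclicGet_eq true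
  have hmem : true ∈ α := by
    by_contra hnot
    rw [firstone, flipFirst_eq_self hnot] at hi₁
    exact hnot (true_mem_of_cyclicGet_eq_true hi₁)
  obtain ⟨s, hs, hpre, hsv, hβeq⟩ := exists_firstone_eq_set hmem
  rw [hβeq] at hper hi₁
  obtain ⟨m, hm, h2m, hperiod⟩ := hper.exists_period (by rw [← length_pos_iff, length_set]; omega)
  rw [length_set] at h2m
  have hβα : ∀ i < α.length, s ≠ i → (α.set s false).cyclicGet i = α.cyclicGet i :=
    fun i hi hsi => by rw [cyclicGet_set hi, if_neg hsi]
  have hβs : (α.set s false).cyclicGet s = false := by rw [cyclicGet_set hs, if_pos rfl]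
  have hαpre : ∀ j < s, α.cyclicGet j = false :=
    fun j hj => by rw [cyclicGet_of_lt (by omega), hpre j hj]
  -- the flipped string is not `0^n`, so the first `1` of `α` lies in the first period
  have hsm : s < m := by
    by_contra! hms
    have := Nat.mod_lt i₁ hm
    rw [← hperiod.map_mod_nat, hβα _ (by omega) (by omega), hαpre _ (by omega)] at hi₁
    exact Bool.false_ne_true hi₁
  have hle := hα.cyclicGet_le_add hs m fun j hj => by
    rw [← hβα _ (by omega) (by omega), hperiod j, hβα _ (by omega) (by omega)]
  rw [cyclicGet_of_lt hs, hsv, ← hβα _ (by omega) (by omega), hperiod, hβs] at hle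
  exact absurd hle (by decide)

theorem not_isPeriodic_lastone {α : List Bool} (hne : α ≠ []) (hα : IsNecklace α)
    (hβ : IsAsymBracelet (lastone α)) : ¬ IsPeriodic (lastone α) := by
  intro hper
  have hpos : 0 < α.length := length_pos_iff.2 hne
  set w := α.set (α.length - 1) false
  obtain ⟨k, hk⟩ := exists_lastone_eq_rotate_set hne
  obtain ⟨i₁, -, hi₁⟩ := hβ.exists_cyclicGet_eq true
  rw [hk] at hper hi₁
  obtain ⟨m, hm, h2m, hperiod⟩ :=
    hper.exists_period (by rw [← length_pos_iff, length_rotate, length_set]; omega)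
  rw [length_rotate, length_set] at h2m
  have hwper : Function.Periodic w.cyclicGet m :=
    (IsRotated.symm ⟨k, rfl⟩ : w.rotate k ~r w).periodic_cyclicGet hperiod
  have hwα : ∀ i < α.length - 1, w.cyclicGet i = α.cyclicGet i :=
    fun i hi => by rw [cyclicGet_set (by omega), if_neg (by omega)]
  have hwm : w.cyclicGet (m - 1) = false := by
    calc w.cyclicGet (m - 1) = w.cyclicGet (m - 1 + w.length) := (cyclicGet_periodic w _).symm
      _ = w.cyclicGet (α.length - 1 + m) := by rw [length_set]; congr 1; omega
      _ = false := by rw [hwper, cyclicGet_set (by omega), if_pos rfl]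
  obtain ⟨a, ham, ha, hpre⟩ :=
    hwper.exists_first_true_lt hm ⟨_, by rwa [cyclicGet_rotate] at hi₁⟩
  have ham' : a ≠ m - 1 := by rintro rfl; exact Bool.false_ne_true (hwm ▸ ha)
  -- rotating by `m - 1` puts the `0` at position `m - 1` in front of the leading `0`s of `w`
  have hshift : ∀ j ≤ a, w.cyclicGet (j + (m - 1)) = false := by
    intro j hj
    cases j with
    | zero => rwa [zero_add]
    | succ j => rw [show j + 1 + (m - 1) = j + m by omega, hwper, hpre j (by omega)]
  have hle := hα.cyclicGet_le_add (i := a) (by omega) (m - 1) fun j hj => by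
    rw [← hwα _ (by omega), ← hwα _ (by omega), hshift j hj.le, hpre j hj]
  rw [← hwα _ (by omega), ← hwα _ (by omega), ha, hshift a le_rfl] at hle
  exact absurd hle (by decide)

theorem not_isPeriodic_lastzero {α : List Bool} (hα : IsAsymBracelet α) :
    ¬ IsPeriodic (lastzero α) := by
  intro hper
  obtain ⟨i₀, hi₀, hi₀'⟩ := hα.exists_cyclicGet_eq false
  rw [cyclicGet_of_lt hi₀] at hi₀'
  obtain ⟨p, hp, hafter, hpv, hβeq⟩ := exists_lastzero_eq_set (hi₀' ▸ getElem_mem hi₀)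
  have hαp : α.cyclicGet p = false := by rw [cyclicGet_of_lt hp, hpv]
  have hα0 : α.cyclicGet 0 = false :=
    Bool.eq_false_of_le_false (hαp ▸ hα.1.cyclicGet_zero_le hα.ne_nil p)
  have hp0 : 0 < p := by
    refine Nat.pos_of_ne_zero fun hp0 => hα.ne_false_cons_replicate_true (α.length - 1) ?_
    subst hp0
    refine ext_getElem (by simp; omega) fun i h₁ _ => ?_
    cases i with
    | zero => simpa using hpv
    | succ i => simpa using hafter (i + 1) (by omega) h₁
  rw [hβeq] at hper
  obtain ⟨m, hm, h2m, hperiod⟩ := hper.exists_period (by rw [← length_pos_iff, length_set]; omega)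
  rw [length_set] at h2m
  have hβα : ∀ i < α.length, p ≠ i → (α.set p true).cyclicGet i = α.cyclicGet i :=
    fun i hi hpi => by rw [cyclicGet_set hi, if_neg hpi]
  by_cases hpm : p < m
  · -- position `m` lies in the final run of `1`s of `α`, while `α` starts with `0`
    have h := hperiod.eq
    rw [hβα m (by omega) (by omega), hβα 0 (by omega) (by omega), hα0,
      cyclicGet_of_lt (by omega), hafter m hpm] at h
    exact Bool.noConfusion h
  · have hmod : p % m + p / m * m = p := Nat.mod_add_div' p m
    have hpm' : p % m < m := Nat.mod_lt p hm
    have hperiod' : Function.Periodic (α.set p true).cyclicGet (p / m * m) := by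
      simpa only [Nat.cast_id] using hperiod.nat_mul (p / m)
    have hle := hα.1.cyclicGet_le_add (i := p % m) (by omega) (p / m * m) fun j hj => by
      rw [← hβα _ (by omega) (by omega), hperiod' j, hβα _ (by omega) (by omega)]
    rw [hmod, hαp, ← hβα _ (by omega) (by omega), hperiod.map_mod_nat,
      cyclicGet_set (by omega), if_pos rfl] at hle
    exact absurd hle (by decide)

theorem parent_aperiodic_general (n : ℕ) (α : List Bool) (hα : α ∈ A n) :
    ¬ IsPeriodic (parentStr n α) := by
  obtain ⟨-, hα⟩ := hα
  unfold parentStr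
  split_ifs with hfirst hlast
  · exact not_isPeriodic_firstone hα.1 hfirst.2
  · exact not_isPeriodic_lastone hα.ne_nil hα.1 hlast.2
  · exact not_isPeriodic_lastzero hα

/-- For `n ≥ 6` and every `α ∈ A n` with `α ≠ rootStr n`, the string
`parentStr n α` is aperiodic. -/
theorem parent_aperiodic (n : ℕ) (hn : 6 ≤ n) (α : List Bool) (hα : α ∈ A n)
    (hne : α ≠ rootStr n) :
    ¬ IsPeriodic (parentStr n α) :=
  parent_aperiodic_general n α hα
end

section
/- For every n ≥ 1, the number of periodic strings in A(n) is at most the number of aperiodic strings in A(n). -/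
/-!
A periodic asymmetric bracelet `α = γ^t` of length `n` (`t ≥ 2`, `γ = ap α`, `d = |γ|`) is sent to
the aperiodic string `β = 0^(n-d-1) 1 γ`. As a nonzero necklace, `α` and hence `γ` ends in `1`,
say `γ = ζ1`; asymmetry of `α` at rotation `1` of `α^R` gives `ζ1 < ζ^R 1`. Since
`m = n-d-1 ≥ |ζ|` and `ζ ≠ 0^m` (a palindrome), `ζ` contains no run `0^m`, so every nontrivial
rotation of `β = 0^m 1 ζ 1` begins with fewer than `m` zeros before a `1`, so `β` is strictly
smaller than all its nontrivial rotations: a necklace, and aperiodic. The same holds for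
`0^m 1 ζ^R 1`, of which `β^R` is a rotation and which exceeds `β` because `ζ1 < ζ^R 1`.
Finally `γ` and `n` determine `α`, so the map is injective.
-/

open List

theorem List.append_lt_append_of_length_eq {α : Type*} [LT α] {u v : List α} (x y : List α)
    (hlen : u.length = v.length) (h : u < v) : u ++ x < v ++ y := by
  induction u generalizing v with
  | nil => cases v <;> simp_all
  | cons a u ih =>
    cases v with
    | nil => simp at hlen
    | cons b v =>
      cases h with
      | rel hab => exact Lex.rel hab
      | cons h => exact Lex.cons (ih (by simpa using hlen) h)

theorem replicate_false_append_lt {m : ℕ} {x : List Bool} (hx : ¬ replicate m false <+: x)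
    (hlen : m ≤ x.length) (u : List Bool) : replicate m false ++ u < x := by
  induction m generalizing x with
  | zero => exact absurd x.nil_prefix hx
  | succ m ih =>
    obtain _ | ⟨b, x⟩ := x
    · simp at hlen
    cases b with
    | false =>
      rw [replicate_succ, cons_prefix_cons] at hx
      exact Lex.cons (ih (by simpa using hx) (by simpa using hlen))
    | true => exact Lex.rel (by decide)

theorem not_replicate_prefix_append_true {m : ℕ} {x : List Bool}
    (hx : ¬ replicate m false <:+: x) (y : List Bool) :
    ¬ replicate m false <+: x ++ true :: y := by
  intro hp
  rcases le_or_gt m x.length with hm | hm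
  · exact hx (prefix_of_prefix_length_le hp (prefix_append x _) (by simpa)).isInfix
  · have hxt : x ++ [true] <+: replicate m false :=
      prefix_of_prefix_length_le (by simp) hp (by simpa)
    simpa using hxt.subset (by simp : true ∈ x ++ [true])

theorem true_not_mem_of_append_false_le {ζ : List Bool} (h : ζ ++ [false] ≤ false :: ζ) :
    true ∉ ζ := by
  induction ζ with
  | nil => simp
  | cons a ζ ih =>
    rw [le_iff_lt_or_eq] at h ih
    cases a <;> simp_all [cons_lt_cons_iff, Bool.lt_iff]

theorem IsNecklace.getLast?_eq_some_true {α : List Bool} (h : IsNecklace α) (ht : true ∈ α) :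
    α.getLast? = some true := by
  obtain rfl | ⟨ζ, b, rfl⟩ := α.eq_nil_or_concat'
  · simp at ht
  cases b with
  | true => simp
  | false =>
    have hrot := h ζ.length
    rw [rotate_append_length_eq] at hrot
    exact absurd (by simpa using ht) (true_not_mem_of_append_false_le hrot)

theorem true_mem_of_lt_reverse {α : List Bool} (h : α < α.reverse) : true ∈ α := by
  by_contra ht
  have hrep : α = replicate α.length false := eq_replicate_iff.2 ⟨rfl, fun b hb => by
    cases b
    · rfl
    · exact absurd hb ht⟩
  rw [hrep, reverse_replicate] at h
  exact lt_irrefl _ h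

theorem replicate_false_append_true_cons_inj {m m' : ℕ} {u v : List Bool}
    (h : replicate m false ++ true :: u = replicate m' false ++ true :: v) : u = v := by
  induction m generalizing m' with
  | zero => cases m' <;> simp_all [replicate_succ]
  | succ m ih => cases m' <;> simp_all [replicate_succ]

theorem listPow_succ (γ : List Bool) (t : ℕ) : listPow γ (t + 1) = γ ++ listPow γ t := by
  simp [listPow, replicate_succ]

theorem listPow_succ' (γ : List Bool) (t : ℕ) : listPow γ (t + 1) = listPow γ t ++ γ := by
  simp [listPow, replicate_succ']

theorem reverse_listPow (γ : List Bool) (t : ℕ) :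
    (listPow γ t).reverse = listPow γ.reverse t := by
  simp [listPow, reverse_flatten]

theorem listPow_append_succ (u v : List Bool) (t : ℕ) :
    listPow (u ++ v) (t + 1) = u ++ listPow (v ++ u) t ++ v := by
  induction t with
  | zero => simp [listPow]
  | succ t ih => rw [listPow_succ, ih, listPow_succ]; simp

theorem rotate_listPow_append (u v : List Bool) (t : ℕ) :
    (listPow (u ++ v) t).rotate u.length = listPow (v ++ u) t := by
  cases t with
  | zero => simp [listPow]
  | succ t => rw [listPow_append_succ, append_assoc, rotate_append_length_eq, listPow_succ']; simp

theorem listPow_le_listPow {u v : List Bool} (hlen : u.length = v.length) (h : u ≤ v) (t : ℕ) :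
    listPow u t ≤ listPow v t := by
  obtain h | rfl := h.lt_or_eq
  · cases t with
    | zero => simp [listPow]
    | succ t =>
      rw [listPow_succ, listPow_succ]
      exact (append_lt_append_of_length_eq _ _ hlen h).le
  · rfl

theorem IsPeriodic.exists_rotate_eq {α : List Bool} (h : IsPeriodic α) (hα : α ≠ []) :
    ∃ k, 0 < k ∧ k < α.length ∧ α.rotate k = α := by
  obtain ⟨γ, j, hj, rfl⟩ := h
  obtain ⟨j, rfl⟩ := Nat.exists_eq_add_of_le' hj
  have hpos : 0 < (j + 2) * γ.length := by rw [← length_listPow]; exact length_pos_iff.2 hα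
  refine ⟨γ.length, Nat.pos_of_mul_pos_left hpos, ?_, ?_⟩
  · rw [length_listPow]; nlinarith
  · conv_lhs => rw [listPow_succ, rotate_append_length_eq, ← listPow_succ']

theorem exists_listPow_ap {α : List Bool} (hα : α ≠ []) : ∃ t, listPow (ap α) t = α := by
  obtain ⟨γ, hγ, t, hγt⟩ := Nat.sInf_mem (s := {p | ∃ γ : List Bool, γ.length = p ∧
    ∃ t : ℕ, listPow γ t = α}) ⟨α.length, α, rfl, 1, by simp [listPow]⟩
  obtain _ | t := t
  · simp [listPow, ← hγt] at hα
  · have hap : ap α = γ := by rw [ap, ← hγ, ← hγt, listPow_succ, take_left]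
    exact ⟨t + 1, hap ▸ hγt⟩

theorem length_ap_le {α γ : List Bool} {t : ℕ} (h : listPow γ t = α) :
    (ap α).length ≤ γ.length :=
  (length_take_le _ _).trans (Nat.sInf_le ⟨γ, rfl, t, h⟩)

theorem IsPeriodic.two_mul_length_ap_le {α : List Bool} (h : IsPeriodic α) :
    2 * (ap α).length ≤ α.length := by
  obtain ⟨γ, j, hj, hα⟩ := h
  have hap := length_ap_le hα
  have hlen := length_listPow γ j
  rw [hα] at hlen
  nlinarith

theorem eq_of_ap_eq {α β : List Bool} (hα : α ≠ []) (hlen : α.length = β.length)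
    (h : ap α = ap β) : α = β := by
  have hβ : β ≠ [] := by rw [← length_pos_iff] at hα ⊢; omega
  obtain ⟨t, hαt⟩ := exists_listPow_ap hα
  obtain ⟨t', hβt⟩ := exists_listPow_ap hβ
  have hpos : 0 < (ap α).length := by
    rw [length_pos_iff]
    rintro hnil
    rw [hnil] at hαt
    exact hα (by simpa [listPow] using hαt.symm)
  rw [← hαt, ← hβt, ← h, length_listPow, length_listPow] at hlen
  rw [← hαt, ← hβt, ← h, Nat.eq_of_mul_eq_mul_right hpos hlen]

def zeroRunWord (m : ℕ) (ζ : List Bool) : List Bool := replicate m false ++ true :: (ζ ++ [true])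

section ZeroRunWord

variable {m : ℕ} {ζ : List Bool}

theorem length_zeroRunWord (m : ℕ) (ζ : List Bool) :
    (zeroRunWord m ζ).length = m + ζ.length + 2 := by
  simp only [zeroRunWord, length_append, length_replicate, length_cons, length_nil, zero_add]
  omega

theorem zeroRunWord_rotate (hζ : ¬ replicate m false <:+: ζ) {k : ℕ} (hk0 : 0 < k)
    (hk : k < (zeroRunWord m ζ).length) :
    ∃ x y, ¬ replicate m false <:+: x ∧ (zeroRunWord m ζ).rotate k = x ++ true :: y := by
  rw [length_zeroRunWord] at hk
  rcases le_or_gt k m with hkm | hkm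
  · obtain ⟨j, rfl⟩ := Nat.exists_eq_add_of_le hkm
    refine ⟨replicate j false, ζ ++ [true] ++ replicate k false, fun h => ?_, ?_⟩
    · have := h.length_le
      simp only [length_replicate] at this
      omega
    · have hsplit := rotate_append_length_eq (replicate k false)
        (replicate j false ++ true :: (ζ ++ [true]))
      rw [length_replicate, ← append_assoc, ← replicate_add] at hsplit
      rw [zeroRunWord, hsplit]
      simp
  · obtain ⟨i, rfl⟩ := Nat.exists_eq_add_of_lt hkm
    refine ⟨ζ.drop i, replicate m false ++ true :: ζ.take i,
      fun h => hζ (h.trans (drop_suffix i ζ).isInfix), ?_⟩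
    have hsplit := rotate_append_length_eq (replicate m false ++ true :: ζ.take i)
      (ζ.drop i ++ [true])
    have hlen : (replicate m false ++ true :: ζ.take i).length = m + i + 1 := by
      simp only [length_append, length_replicate, length_cons, length_take]
      omega
    have hword : (replicate m false ++ true :: ζ.take i) ++ (ζ.drop i ++ [true]) =
        zeroRunWord m ζ := by
      simp only [zeroRunWord, append_assoc, cons_append, ← append_assoc (ζ.take i),
        take_append_drop]
    rw [hlen, hword] at hsplit
    simpa using hsplit

theorem zeroRunWord_lt_rotate (hζ : ¬ replicate m false <:+: ζ) {k : ℕ} (hk0 : 0 < k)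
    (hk : k < (zeroRunWord m ζ).length) : zeroRunWord m ζ < (zeroRunWord m ζ).rotate k := by
  obtain ⟨x, y, hx, hrot⟩ := zeroRunWord_rotate hζ hk0 hk
  have hlen : m ≤ (x ++ true :: y).length := by
    rw [← hrot, length_rotate, length_zeroRunWord]
    omega
  rw [hrot]
  exact replicate_false_append_lt (not_replicate_prefix_append_true hx y) hlen _

theorem isNecklace_zeroRunWord (hζ : ¬ replicate m false <:+: ζ) :
    IsNecklace (zeroRunWord m ζ) := by
  intro k
  rw [← rotate_mod]
  rcases (k % (zeroRunWord m ζ).length).eq_zero_or_pos with hk | hk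
  · rw [hk, rotate_zero]
  · exact (zeroRunWord_lt_rotate hζ hk (Nat.mod_lt _ (by simp [length_zeroRunWord]))).le

theorem not_isPeriodic_zeroRunWord (hζ : ¬ replicate m false <:+: ζ) :
    ¬ IsPeriodic (zeroRunWord m ζ) := fun h => by
  obtain ⟨k, hk0, hk, hrot⟩ := h.exists_rotate_eq (by simp [zeroRunWord])
  exact (zeroRunWord_lt_rotate hζ hk0 hk).ne' hrot

theorem reverse_zeroRunWord (m : ℕ) (ζ : List Bool) :
    (zeroRunWord m ζ).reverse = (zeroRunWord m ζ.reverse).rotate m := by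
  have hsplit := rotate_append_length_eq (replicate m false) (true :: (ζ.reverse ++ [true]))
  rw [length_replicate] at hsplit
  rw [zeroRunWord, zeroRunWord, hsplit]
  simp

theorem isAsymBracelet_zeroRunWord (hζ : ¬ replicate m false <:+: ζ)
    (hlt : ζ ++ [true] < ζ.reverse ++ [true]) : IsAsymBracelet (zeroRunWord m ζ) := by
  refine ⟨isNecklace_zeroRunWord hζ, fun k => ?_⟩
  have hζ' : ¬ replicate m false <:+: ζ.reverse := by
    rwa [← reverse_replicate, reverse_infix]
  have hrev : zeroRunWord m ζ < zeroRunWord m ζ.reverse := append_left_lt (Lex.cons hlt)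
  rw [reverse_zeroRunWord, rotate_rotate]
  exact hrev.trans_le (isNecklace_zeroRunWord hζ' _)

theorem not_replicate_infix_of_reverse_ne (hlen : ζ.length ≤ m) (hζ : ζ.reverse ≠ ζ) :
    ¬ replicate m false <:+: ζ := fun h => by
  have hle := h.length_le
  rw [length_replicate] at hle
  rw [← h.eq_of_length (by simp; omega), reverse_replicate] at hζ
  exact hζ rfl

theorem zeroRunWord_mem_A (hlen : ζ.length ≤ m) (hlt : ζ ++ [true] < ζ.reverse ++ [true]) :
    zeroRunWord m ζ ∈ A (m + ζ.length + 2) ∧ ¬ IsPeriodic (zeroRunWord m ζ) := by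
  have hζ : ¬ replicate m false <:+: ζ := not_replicate_infix_of_reverse_ne hlen fun h => by
    rw [h] at hlt
    exact lt_irrefl _ hlt
  exact ⟨⟨length_zeroRunWord m ζ, isAsymBracelet_zeroRunWord hζ hlt⟩,
    not_isPeriodic_zeroRunWord hζ⟩

end ZeroRunWord

theorem IsAsymBracelet.exists_ap_eq {α : List Bool} (h : IsAsymBracelet α) :
    ∃ ζ, ap α = ζ ++ [true] ∧ ζ ++ [true] < ζ.reverse ++ [true] := by
  obtain ⟨hneck, hasym⟩ := h
  have htrue : true ∈ α := true_mem_of_lt_reverse (by simpa using hasym 0)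
  obtain ⟨t, hαt⟩ := exists_listPow_ap (ne_nil_of_mem htrue)
  generalize ap α = γ at hαt ⊢
  subst hαt
  obtain _ | t := t
  · simp [listPow] at htrue
  have hγ : γ ≠ [] := by
    rintro rfl
    simp [listPow] at htrue
  obtain ⟨ζ, rfl⟩ : ∃ ζ, γ = ζ ++ [true] := by
    rw [← getLast?_eq_some_iff, ← getLast?_append_of_ne_nil (listPow γ t) hγ, ← listPow_succ']
    exact hneck.getLast?_eq_some_true htrue
  refine ⟨ζ, rfl, lt_of_not_ge fun hge => ?_⟩
  have hrot : (listPow (ζ ++ [true]) (t + 1)).reverse.rotate 1 =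
      listPow (ζ.reverse ++ [true]) (t + 1) := by
    simpa [reverse_listPow] using rotate_listPow_append [true] ζ.reverse (t + 1)
  have hlt := hasym 1
  rw [hrot] at hlt
  exact (listPow_le_listPow (by simp) hge _).not_gt hlt

theorem periodic_le_aperiodic_general (n : ℕ) :
    {α ∈ A n | IsPeriodic α}.ncard ≤ {α ∈ A n | ¬ IsPeriodic α}.ncard := by
  have hfin : {α ∈ A n | ¬ IsPeriodic α}.Finite :=
    (finite_length_eq Bool n).subset fun α hα => hα.1.1
  refine Set.ncard_le_ncard_of_injOn
    (fun α => replicate (n - (ap α).length - 1) false ++ true :: ap α) ?_ ?_ hfin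
  · rintro α ⟨⟨hlen, hA⟩, hper⟩
    obtain ⟨ζ, hap, hlt⟩ := hA.exists_ap_eq
    have h2 := hper.two_mul_length_ap_le
    rw [hap, hlen, length_append, length_singleton] at h2
    have hn : n = n - ζ.length - 2 + ζ.length + 2 := by omega
    have hf : replicate (n - (ap α).length - 1) false ++ true :: ap α =
        zeroRunWord (n - ζ.length - 2) ζ := by
      rw [hap, zeroRunWord, length_append, length_singleton, Nat.sub_sub, Nat.sub_sub]
    obtain ⟨hmem, hnper⟩ := zeroRunWord_mem_A (m := n - ζ.length - 2) (by omega) hlt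
    rw [← hn] at hmem
    exact hf ▸ ⟨hmem, hnper⟩
  · rintro α ⟨⟨hlen, hA⟩, -⟩ β ⟨⟨hlen', -⟩, -⟩ heq
    exact eq_of_ap_eq hA.ne_nil (hlen.trans hlen'.symm) (replicate_false_append_true_cons_inj heq)

/-- For every `n ≥ 1`, the number of periodic strings in `A n` is at most
the number of aperiodic strings in `A n`. -/
theorem periodic_le_aperiodic (n : ℕ) (hn : 1 ≤ n) :
    {α ∈ A n | IsPeriodic α}.ncard ≤ {α ∈ A n | ¬ IsPeriodic α}.ncard :=
  periodic_le_aperiodic_general n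
end

section
/- For every n ≥ 1, n·|A(n)| ≤ 2·L_n, where L_n = Σ_{α ∈ A(n)} |ap(α)|. -/
/-!
Split `A n` into the aperiodic bracelets, for which `|ap α| = n`, and the periodic ones, and
flip the last `0` of a periodic `α` with period `p ∣ n`, `2p ≤ n`. Since `α` is `p`-periodic,
that `0` sits in the last block, at a position `f ≥ n - p ≥ p`. The result is an aperiodic
asymmetric bracelet: whenever `α` is smaller than a rotation of `α` or of its reversal, it is
so already within the first `p` letters, which the flip leaves alone, while a rotation by a
multiple `k` of `p` now shows the new `1` at position `f - k`, where the flipped word still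
has its `0`. The map is injective: two preimages with periods `p₁ ≤ p₂` share their first `p₂`
letters, so the period word of the necklace `α₂` has the linear period `p₁`, which forces
`α₂` to be `p₁`-periodic, and then `α₁ = α₂`. Hence there are at most as many periodic
bracelets as aperiodic ones, and `n·|A n| ≤ 2n·#aperiodic ≤ 2 L_n`.
-/

open List Function

namespace List

variable {X : Type*}

theorem rotate_one_iterate (l : List X) (k : ℕ) : (fun l => l.rotate 1)^[k] l = l.rotate k := by
  induction k with
  | zero => simp
  | succ k ih => rw [iterate_succ_apply', ih, rotate_rotate]

theorem isPeriodicPt_rotate_one_iff {l : List X} {k : ℕ} :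
    IsPeriodicPt (fun l => l.rotate 1) k l ↔ l.rotate k = l := by
  rw [IsPeriodicPt, IsFixedPt, rotate_one_iterate]

/-- For `l ≠ []`, this is the length of `ap l`. -/
noncomputable def rotationPeriod (l : List X) : ℕ := minimalPeriod (fun l => l.rotate 1) l

theorem rotate_rotationPeriod (l : List X) : l.rotate l.rotationPeriod = l :=
  isPeriodicPt_rotate_one_iff.1 (isPeriodicPt_minimalPeriod _ _)

theorem rotationPeriod_dvd_of_rotate_eq {l : List X} {k : ℕ} (h : l.rotate k = l) :
    l.rotationPeriod ∣ k :=
  (isPeriodicPt_rotate_one_iff.2 h).minimalPeriod_dvd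

theorem rotationPeriod_dvd_length (l : List X) : l.rotationPeriod ∣ l.length :=
  rotationPeriod_dvd_of_rotate_eq l.rotate_length

theorem rotationPeriod_pos (l : List X) : 0 < l.rotationPeriod := by
  cases l with
  | nil => exact minimalPeriod_pos_of_mem_periodicPts ⟨1, one_pos, rfl⟩
  | cons a l =>
    exact minimalPeriod_pos_of_mem_periodicPts
      ⟨_, (a :: l).length_pos_of_ne_nil (by simp), isPeriodicPt_rotate_one_iff.2 (rotate_length _)⟩

theorem rotationPeriod_le_length {l : List X} (hl : l ≠ []) : l.rotationPeriod ≤ l.length :=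
  Nat.le_of_dvd (length_pos_of_ne_nil hl) (rotationPeriod_dvd_length l)

theorem two_mul_rotationPeriod_le {l : List X} (h : l.rotationPeriod < l.length) :
    2 * l.rotationPeriod ≤ l.length := by
  obtain ⟨c, hc⟩ := rotationPeriod_dvd_length l
  rw [hc] at h ⊢
  have hc : 1 < c := Nat.lt_of_mul_lt_mul_left (by simpa using h)
  rw [mul_comm 2]
  exact Nat.mul_le_mul_left _ hc

theorem rotate_mul_eq_self {l : List X} {p : ℕ} (h : l.rotate p = l) (c : ℕ) :
    l.rotate (c * p) = l :=
  isPeriodicPt_rotate_one_iff.1 ((isPeriodicPt_rotate_one_iff.2 h).const_mul c)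

theorem rotate_rotate_eq_self {l : List X} {p : ℕ} (h : l.rotate p = l) (k : ℕ) :
    (l.rotate k).rotate p = l.rotate k := by
  rw [rotate_rotate, add_comm, ← rotate_rotate, h]

theorem reverse_rotate_eq_self {l : List X} {p : ℕ} (h : l.rotate p = l) (hp : p ∣ l.length) :
    l.reverse.rotate p = l.reverse := by
  obtain ⟨c, hc⟩ : p ∣ l.length - p % l.length :=
    Nat.dvd_sub hp ((Nat.dvd_mod_iff hp).2 dvd_rfl)
  rw [rotate_reverse, hc, mul_comm, rotate_mul_eq_self h]

theorem getElem?_eq_getElem?_mod {l : List X} {p i : ℕ} (h : l.rotate p = l)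
    (hi : i < l.length) : l[i]? = l[i % p]? := by
  rcases Nat.eq_zero_or_pos p with rfl | hp
  · rw [Nat.mod_zero]
  induction i using Nat.strong_induction_on with
  | _ i ih =>
    rcases lt_or_ge i p with hip | hpi
    · rw [Nat.mod_eq_of_lt hip]
    · have := getElem?_rotate (l := l) (n := p) (m := i - p) (by omega)
      rw [h, Nat.sub_add_cancel hpi, Nat.mod_eq_of_lt hi] at this
      rw [← this, ih (i - p) (by omega) (by omega), ← Nat.mod_eq_sub_mod hpi]

theorem getElem?_eq_of_modEq {l : List X} {p i j : ℕ} (h : l.rotate p = l) (hi : i < l.length)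
    (hj : j < l.length) (hij : i ≡ j [MOD p]) : l[i]? = l[j]? := by
  rw [getElem?_eq_getElem?_mod h hi, getElem?_eq_getElem?_mod h hj, hij]

theorem eq_of_take_eq_of_rotate_eq {x y : List X} {p : ℕ} (hx : x.rotate p = x)
    (hy : y.rotate p = y) (hp : 0 < p) (hlen : x.length = y.length) (h : x.take p = y.take p) :
    x = y := by
  refine ext_getElem? fun i => ?_
  rcases lt_or_ge i x.length with hi | hi
  · have hmod := congrArg (·[i % p]?) h
    simp only [getElem?_take, Nat.mod_lt i hp, if_true] at hmod
    rw [getElem?_eq_getElem?_mod hx hi, getElem?_eq_getElem?_mod hy (hlen ▸ hi), hmod]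
  · rw [getElem?_eq_none hi, getElem?_eq_none (hlen ▸ hi)]

theorem take_rotate {l : List X} {r m : ℕ} (h : r + m ≤ l.length) :
    (l.rotate r).take m = (l.take (r + m)).drop r := by
  rw [rotate_eq_drop_append_take (by omega), take_append_of_le_length (by simp; omega), take_drop]

theorem Forall₂.rotate {Y : Type*} {R : X → Y → Prop} {x : List X} {y : List Y}
    (h : Forall₂ R x y) (k : ℕ) : Forall₂ R (x.rotate k) (y.rotate k) := by
  rw [rotate_eq_drop_append_take_mod, rotate_eq_drop_append_take_mod, h.length_eq]
  exact rel_append (forall₂_drop _ h) (forall₂_take _ h)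

theorem le_of_forall₂_le [LinearOrder X] {x y : List X} (h : Forall₂ (· ≤ ·) x y) : x ≤ y := by
  induction h with
  | nil => exact le_rfl
  | @cons a b x y hab _ ih =>
    rcases hab.lt_or_eq with hab | rfl
    · exact le_of_lt (Lex.rel hab)
    · exact cons_le_cons a ih

theorem rotationPeriod_eq_length_of_lt_rotate [LinearOrder X] {l : List X} (hl : l ≠ [])
    (h : ∀ k, 0 < k → k < l.length → l < l.rotate k) : l.rotationPeriod = l.length := by
  refine (rotationPeriod_le_length hl).antisymm (not_lt.1 fun hlt => ?_)
  have := h _ (rotationPeriod_pos l) hlt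
  rw [rotate_rotationPeriod] at this
  exact lt_irrefl _ this

theorem forall₂_le_set_true (l : List Bool) (i : ℕ) : Forall₂ (· ≤ ·) l (l.set i true) := by
  induction l generalizing i with
  | nil => exact Forall₂.nil
  | cons a l ih =>
    cases i with
    | zero => exact Forall₂.cons (Bool.le_true a) (forall₂_refl l)
    | succ i => exact Forall₂.cons le_rfl (ih i)

theorem lt_iff_exists_getElem? {x y : List Bool} (h : x.length = y.length) :
    x < y ↔ ∃ m : ℕ, (∀ i < m, x[i]? = y[i]?) ∧ x[m]? = some false ∧ y[m]? = some true := by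
  induction x generalizing y with
  | nil => cases y <;> simp_all
  | cons a x ih =>
    cases y with
    | nil => simp at h
    | cons b y =>
      rw [cons_lt_cons_iff, ih (by simpa using h), Bool.lt_iff]
      constructor
      · rintro (⟨rfl, rfl⟩ | ⟨rfl, m, hpre, hx, hy⟩)
        · exact ⟨0, by simp, rfl, rfl⟩
        · refine ⟨m + 1, fun i hi => ?_, hx, hy⟩
          cases i with
          | zero => rfl
          | succ i => exact hpre i (by omega)
      · rintro ⟨m, hpre, hx, hy⟩
        cases m with
        | zero => simp_all
        | succ m =>
          exact Or.inr ⟨by simpa using hpre 0 (by omega), m,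
            fun i hi => by simpa using hpre (i + 1) (by omega), hx, hy⟩

theorem set_lt_of_lt {x y : List Bool} {p f : ℕ} (hx : x.rotate p = x) (hy : y.rotate p = y)
    (hp : 0 < p) (hpf : p ≤ f) (hlen : x.length = y.length) (h : x < y) (b : Bool) :
    x.set f b < y := by
  obtain ⟨m, hpre, hxm, hym⟩ := (lt_iff_exists_getElem? hlen).1 h
  have hmn : m < x.length := (List.getElem?_eq_some_iff.1 hxm).1
  -- both words are `p`-periodic, so they already differ within the first `p` letters
  have hmp : m < p := by
    by_contra hpm
    have := hpre (m % p) (by have := Nat.mod_lt m hp; omega)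
    rw [← getElem?_eq_getElem?_mod hx hmn, ← getElem?_eq_getElem?_mod hy (hlen ▸ hmn), hxm,
      hym] at this
    simp at this
  rw [lt_iff_exists_getElem? (by rw [length_set, hlen])]
  exact ⟨m, fun i hi => by rw [getElem?_set_ne (by omega), hpre i hi],
    by rw [getElem?_set_ne (by omega), hxm], hym⟩

theorem set_true_lt_rotate_of_rotate_eq {l : List Bool} {k f : ℕ} (hl : l.rotate k = l)
    (hf : l[f]? = some false) (hk : 0 < k) (hkf : k ≤ f) :
    l.set f true < (l.set f true).rotate k := by
  have hfn : f < l.length := (List.getElem?_eq_some_iff.1 hf).1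
  have hshift : ∀ i, i + k < l.length → l[i + k]? = l[i]? := fun i hi => by
    conv_rhs => rw [← hl]
    rw [getElem?_rotate (by omega), Nat.mod_eq_of_lt hi]
  rw [lt_iff_exists_getElem? (length_rotate _ _).symm]
  refine ⟨f - k, fun i hi => ?_, ?_, ?_⟩
  · rw [getElem?_rotate (by simp; omega), length_set, Nat.mod_eq_of_lt (by omega),
      getElem?_set_ne (by omega), getElem?_set_ne (by omega), hshift i (by omega)]
  · rw [getElem?_set_ne (by omega), ← hshift _ (by omega), Nat.sub_add_cancel hkf, hf]
  · rw [getElem?_rotate (by simp; omega), length_set, Nat.sub_add_cancel hkf,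
      Nat.mod_eq_of_lt hfn, getElem?_set_self hfn]

theorem exists_eq_append_false_replicate {l : List Bool} (h : false ∈ l) :
    ∃ u k, l = u ++ false :: replicate k true := by
  induction l using reverseRecOn with
  | nil => simp at h
  | append_singleton l b ih =>
    cases b with
    | false => exact ⟨l, 0, rfl⟩
    | true =>
      obtain ⟨u, k, rfl⟩ := ih (by simpa using h)
      exact ⟨u, k + 1, by simp [replicate_succ']⟩

end List

theorem rotate_listPow_length (γ : List Bool) (t : ℕ) :
    (listPow γ t).rotate γ.length = listPow γ t := by
  cases t with
  | zero => simp [listPow]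
  | succ t =>
    have h₁ : listPow γ (t + 1) = γ ++ listPow γ t := by simp [listPow, replicate_succ]
    have h₂ : listPow γ (t + 1) = listPow γ t ++ γ := by simp [listPow, replicate_succ']
    rw [h₁, rotate_append_length_eq, ← h₁, ← h₂]

theorem rotationPeriod_le_length_ap {l : List Bool} (hl : l ≠ []) :
    l.rotationPeriod ≤ (ap l).length := by
  rw [ap, length_take]
  refine le_min (le_csInf ⟨l.length, l, rfl, 1, by simp [listPow]⟩ ?_) (rotationPeriod_le_length hl)
  rintro _ ⟨γ, rfl, t, rfl⟩
  have hγ : γ ≠ [] := by rintro rfl; simp [listPow] at hl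
  exact Nat.le_of_dvd (length_pos_of_ne_nil hγ)
    (rotationPeriod_dvd_of_rotate_eq (rotate_listPow_length γ t))

theorem flipFirst_replicate_append (k : ℕ) (v : List Bool) :
    flipFirst false (replicate k true ++ false :: v) = replicate k true ++ true :: v := by
  induction k with
  | zero => simp [flipFirst]
  | succ k ih => simp [replicate_succ, flipFirst, ih]

theorem exists_lastzero_eq_set_s11 {l : List Bool} (h : false ∈ l) :
    ∃ f, l[f]? = some false ∧ (∀ i, f < i → l[i]? ≠ some false) ∧ lastzero l = l.set f true := by
  obtain ⟨u, k, rfl⟩ := exists_eq_append_false_replicate h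
  refine ⟨u.length, by simp, fun i hi => ?_, ?_⟩
  · obtain ⟨j, rfl⟩ := Nat.exists_eq_add_of_lt hi
    rw [getElem?_append_right (by omega), show u.length + j + 1 - u.length = j + 1 by omega]
    simp [getElem?_replicate]
  · simp [lastzero, flipFirst_replicate_append]

theorem exists_lastzero_eq_set_of_rotate_eq {l : List Bool} {p : ℕ} (h : false ∈ l)
    (hl : l.rotate p = l) (hp : p ∣ l.length) :
    ∃ f, l.length - p ≤ f ∧ l[f]? = some false ∧ lastzero l = l.set f true := by
  obtain ⟨f, hf, hlast, hset⟩ := exists_lastzero_eq_set_s11 h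
  have hfn : f < l.length := (List.getElem?_eq_some_iff.1 hf).1
  rcases Nat.eq_zero_or_pos p with rfl | hp0
  · rw [zero_dvd_iff] at hp
    omega
  have hpn : p ≤ l.length := Nat.le_of_dvd (by omega) hp
  refine ⟨f, ?_, hf, hset⟩
  -- the last block of length `p` also has a `0`, at the position of `f` within its block
  have hmod : f % p + (l.length - p) ≡ f [MOD p] := by
    obtain ⟨c, hc⟩ := Nat.dvd_sub hp (dvd_refl p)
    rw [hc, Nat.ModEq, Nat.add_mul_mod_self_left, Nat.mod_mod]
  have := getElem?_eq_of_modEq hl (by have := Nat.mod_lt f hp0; omega) hfn hmod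
  by_contra hlt
  exact hlast _ (by have := Nat.mod_lt f hp0; omega) (this.trans hf)

theorem IsAsymBracelet.false_mem {α : List Bool} (h : IsAsymBracelet α) : false ∈ α := by
  by_contra hf
  have hrep : α = replicate α.length true :=
    eq_replicate_iff.2 ⟨rfl, fun b hb => by cases b; exacts [absurd hb hf, rfl]⟩
  have h0 := h.2 0
  rw [rotate_zero, hrep, reverse_replicate] at h0
  exact lt_irrefl _ h0

theorem isNecklace_of_lt_rotate {l : List Bool}
    (h : ∀ k, 0 < k → k < l.length → l < l.rotate k) : IsNecklace l := by
  rcases eq_or_ne l [] with rfl | hl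
  · exact fun k => by simp
  intro k
  rw [← rotate_mod]
  rcases Nat.eq_zero_or_pos (k % l.length) with hk | hk
  · rw [hk, rotate_zero]
  · exact (h _ hk (Nat.mod_lt _ (length_pos_of_ne_nil hl))).le

theorem IsNecklace.rotate_eq_self_of_take_rotate {x : List Bool} {q r : ℕ} (hx : IsNecklace x)
    (hq : x.rotate q = x) (hrq : r ≤ q) (h : (x.rotate r).take (q - r) = x.take (q - r)) :
    x.rotate r = x := by
  by_contra hne
  obtain ⟨m, hpre, hxm, hym⟩ :=
    (lt_iff_exists_getElem? (length_rotate x r).symm).1 (lt_of_le_of_ne (hx r) (Ne.symm hne))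
  have hmn : m < x.length := (List.getElem?_eq_some_iff.1 hxm).1
  have hqm : q - r ≤ m := by
    by_contra hlt
    have := congrArg (·[m]?) h
    simp only [getElem?_take, if_pos (not_le.1 hlt), hxm, hym] at this
    simp at this
  -- shifting by `q - r` instead moves the first mismatch to `m + r - q`, with the bits swapped
  have key : x.rotate (q - r) < x := by
    rw [lt_iff_exists_getElem? (length_rotate _ _)]
    refine ⟨m + r - q, fun i hi => ?_, ?_, ?_⟩
    · calc (x.rotate (q - r))[i]? = x[i + (q - r)]? := by
            rw [getElem?_rotate (by omega), Nat.mod_eq_of_lt (by omega)]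
        _ = (x.rotate r)[i + (q - r)]? := hpre _ (by omega)
        _ = (x.rotate q)[i]? := by
            rw [getElem?_rotate (by omega), getElem?_rotate (by omega), Nat.add_assoc,
              Nat.sub_add_cancel hrq]
        _ = x[i]? := by rw [hq]
    · rw [getElem?_rotate (by omega), show m + r - q + (q - r) = m by omega,
        Nat.mod_eq_of_lt hmn, hxm]
    · calc x[m + r - q]? = (x.rotate q)[m + r - q]? := by rw [hq]
        _ = (x.rotate r)[m]? := by
            rw [getElem?_rotate (by omega), getElem?_rotate hmn, Nat.sub_add_cancel (by omega)]
        _ = some true := hym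
  exact absurd (hx (q - r)) (not_le.2 key)

theorem IsNecklace.rotate_eq_self_of_take_eq {x y : List Bool} {q r : ℕ} (hx : IsNecklace x)
    (hxq : x.rotate q = x) (hyr : y.rotate r = y) (hrq : r ≤ q) (hqx : q ≤ x.length)
    (h : x.take q = y.take q) : x.rotate r = x := by
  have hqy : q ≤ y.length := by simpa [hqx] using congrArg length h
  refine hx.rotate_eq_self_of_take_rotate hxq hrq ?_
  calc (x.rotate r).take (q - r) = (y.take q).drop r := by
        rw [take_rotate (by omega), Nat.add_sub_cancel' hrq, h]
    _ = (y.rotate r).take (q - r) := by rw [take_rotate (by omega), Nat.add_sub_cancel' hrq]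
    _ = x.take (q - r) := by
        simpa only [hyr, take_take, min_eq_left (Nat.sub_le q r)] using
          (congrArg (take (q - r)) h).symm

theorem IsNecklace.set_true_lt_rotate {α : List Bool} {f k : ℕ} (hα : IsNecklace α)
    (hfp : α.length - α.rotationPeriod ≤ f) (hf : α[f]? = some false)
    (h2p : 2 * α.rotationPeriod ≤ α.length) (hk : 0 < k) (hkn : k < α.length) :
    α.set f true < (α.set f true).rotate k := by
  set p := α.rotationPeriod
  have hrot : α.rotate p = α := rotate_rotationPeriod α
  by_cases hpk : p ∣ k
  · have hkp : k + p ≤ α.length := by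
      have := Nat.le_of_dvd (by omega) (Nat.dvd_sub (rotationPeriod_dvd_length α) hpk)
      omega
    obtain ⟨c, rfl⟩ := hpk
    exact set_true_lt_rotate_of_rotate_eq (by rw [mul_comm, rotate_mul_eq_self hrot]) hf hk
      (by omega)
  · have hlt : α < α.rotate k :=
      lt_of_le_of_ne (hα k) fun h => hpk (rotationPeriod_dvd_of_rotate_eq h.symm)
    exact (set_lt_of_lt hrot (rotate_rotate_eq_self hrot k) (rotationPeriod_pos α) (by omega)
      (length_rotate _ _).symm hlt true).trans_le
      (le_of_forall₂_le ((forall₂_le_set_true α f).rotate k))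

section LastZero

variable {n : ℕ} {α : List Bool}

theorem lastzero_mem_A (hα : α ∈ A n) (hper : α.rotationPeriod < n) :
    lastzero α ∈ A n ∧ (lastzero α).rotationPeriod = n := by
  obtain ⟨rfl, hneck, hasym⟩ := hα
  have hrot := rotate_rotationPeriod α
  have h2p := two_mul_rotationPeriod_le hper
  obtain ⟨f, hfp, hf, hset⟩ := exists_lastzero_eq_set_of_rotate_eq
    (IsAsymBracelet.false_mem ⟨hneck, hasym⟩) hrot (rotationPeriod_dvd_length α)
  have hlen : (α.set f true).length = α.length := length_set
  have hstrict : ∀ k, 0 < k → k < (α.set f true).length →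
      α.set f true < (α.set f true).rotate k :=
    fun k hk hkn => hneck.set_true_lt_rotate hfp hf h2p hk (hlen ▸ hkn)
  rw [hset]
  refine ⟨⟨hlen, isNecklace_of_lt_rotate hstrict, fun k => ?_⟩,
    hlen ▸ rotationPeriod_eq_length_of_lt_rotate (ne_nil_of_length_pos (by omega)) hstrict⟩
  have hrev := reverse_rotate_eq_self hrot (rotationPeriod_dvd_length α)
  exact (set_lt_of_lt hrot (rotate_rotate_eq_self hrev k) (rotationPeriod_pos α) (by omega)
    (by simp) (hasym k) true).trans_le
    (le_of_forall₂_le ((forall₂_reverse_iff.2 (forall₂_le_set_true α f)).rotate k))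

theorem take_lastzero (hα : α ∈ A n) {m : ℕ} (hm : m + α.rotationPeriod ≤ n) :
    (lastzero α).take m = α.take m := by
  obtain ⟨f, hfp, -, hset⟩ := exists_lastzero_eq_set_of_rotate_eq (IsAsymBracelet.false_mem hα.2)
    (rotate_rotationPeriod α) (rotationPeriod_dvd_length α)
  rw [hset, take_set_of_le (by have := hα.1; omega)]

theorem lastzero_injOn : Set.InjOn lastzero {α | α ∈ A n ∧ α.rotationPeriod < n} := by
  intro α₁ ⟨h₁, hp₁⟩ α₂ ⟨h₂, hp₂⟩ heq
  wlog hle : α₁.rotationPeriod ≤ α₂.rotationPeriod generalizing α₁ α₂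
  · exact (this h₂ hp₂ h₁ hp₁ heq.symm (le_of_not_ge hle)).symm
  have hlen₂ : α₂.length = n := h₂.1
  have h2p₂ := two_mul_rotationPeriod_le (hlen₂ ▸ hp₂)
  rw [hlen₂] at h2p₂
  have htake : α₂.take α₂.rotationPeriod = α₁.take α₂.rotationPeriod := by
    rw [← take_lastzero h₁ (by omega), heq, take_lastzero h₂ (by omega)]
  have hrot : α₂.rotate α₁.rotationPeriod = α₂ :=
    h₂.2.1.rotate_eq_self_of_take_eq (rotate_rotationPeriod α₂) (rotate_rotationPeriod α₁) hle
      (by omega) htake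
  have hp : α₁.rotationPeriod = α₂.rotationPeriod :=
    hle.antisymm (Nat.le_of_dvd (rotationPeriod_pos α₁) (rotationPeriod_dvd_of_rotate_eq hrot))
  refine eq_of_take_eq_of_rotate_eq (rotate_rotationPeriod α₁) (hp ▸ rotate_rotationPeriod α₂)
    (rotationPeriod_pos α₁) (h₁.1.trans h₂.1.symm) ?_
  rw [hp, htake]

end LastZero

theorem card_A_le_twice_L_general (n : ℕ) :
    n * (A n).ncard ≤ 2 * ∑ᶠ α ∈ A n, (ap α).length := by
  have hfin : (A n).Finite := (List.finite_length_eq Bool n).subset fun α hα => hα.1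
  rw [finsum_mem_eq_finite_toFinset_sum _ hfin, Set.ncard_eq_toFinset_card _ hfin]
  set s := hfin.toFinset
  set P := s.filter (fun α => α.rotationPeriod < n)
  set Q := s.filter (fun α => ¬ α.rotationPeriod < n)
  have hPQ : P.card ≤ Q.card := by
    refine Finset.card_le_card_of_injOn lastzero (fun α hα => ?_)
      ((lastzero_injOn (n := n)).mono ?_)
    · simp only [P, Q, s, Finset.coe_filter, Set.Finite.mem_toFinset, Set.mem_ofPred_eq] at hα ⊢
      exact ⟨(lastzero_mem_A hα.1 hα.2).1, (lastzero_mem_A hα.1 hα.2).2.not_lt⟩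
    · intro α hα
      simpa [P, s] using hα
  have hQ : n * Q.card ≤ ∑ α ∈ s, (ap α).length := calc
    n * Q.card = ∑ α ∈ Q, n := by rw [Finset.sum_const, smul_eq_mul, mul_comm]
    _ ≤ ∑ α ∈ Q, (ap α).length := Finset.sum_le_sum fun α hα => by
        simp only [Q, s, Finset.mem_filter, Set.Finite.mem_toFinset, not_lt] at hα
        exact hα.2.trans (rotationPeriod_le_length_ap (ne_nil_of_mem hα.1.2.false_mem))
    _ ≤ ∑ α ∈ s, (ap α).length := Finset.sum_le_sum_of_subset (Finset.filter_subset _ _)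
  calc n * s.card = n * P.card + n * Q.card := by
        rw [← Finset.card_filter_add_card_filter_not (fun α => α.rotationPeriod < n), mul_add]
    _ ≤ 2 * ∑ α ∈ s, (ap α).length := by nlinarith

/-- For every `n ≥ 1`, `n·|A n| ≤ 2·L_n` where
`L_n = Σ_{α ∈ A n} |ap α|`. -/
theorem card_A_le_twice_L (n : ℕ) (hn : 1 ≤ n) :
    n * (A n).ncard ≤ 2 * ∑ᶠ α ∈ A n, (ap α).length :=
  card_A_le_twice_L_general n
end

section
/- Let α and β be asymmetric bracelets of length n (possibly equal). Then no rotation of α equals the reversal of a rotation of β. Consequently, if a string belongs to S(n), its reversal does not belong to S(n). -/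
theorem IsAsymBracelet.lt_of_isRotated_reverse {α β : List Bool} (hβ : IsAsymBracelet β)
    (h : β.reverse ~r α) : β < α := by
  obtain ⟨m, rfl⟩ := h
  exact hβ.2 m

/-- Reversing `β.reverse ~r α` gives `α.reverse ~r β`, so asymmetry yields both `β < α` and `α < β`. -/
theorem IsAsymBracelet.not_isRotated_reverse {α β : List Bool} (hα : IsAsymBracelet α)
    (hβ : IsAsymBracelet β) : ¬ β.reverse ~r α := fun h =>
  (hβ.lt_of_isRotated_reverse h).asymm <|
    hα.lt_of_isRotated_reverse (by simpa using h.reverse.symm)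

/-- If `α` and `β` are asymmetric bracelets of length `n` (possibly equal),
then no rotation of `α` equals the reversal of a rotation of `β`.  Consequently, if a string
belongs to `S n`, its reversal does not. -/
theorem no_rotation_eq_reversed_rotation (n : ℕ) (α β : List Bool)
    (hα : α ∈ A n) (hβ : β ∈ A n) :
    (∀ k l : ℕ, α.rotate k ≠ (β.rotate l).reverse) ∧
      (∀ γ : List Bool, γ ∈ S n → γ.reverse ∉ S n) := by
  refine ⟨fun k l h => hα.2.not_isRotated_reverse hβ.2 ?_, ?_⟩
  · have hβl : β.reverse ~r α.rotate k := h ▸ (List.IsRotated.forall β l).symm.reverse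
    exact hβl.trans (List.IsRotated.forall α k)
  · rintro γ ⟨α', hα', hγ⟩ ⟨β', hβ', hγr⟩
    have hβ'γ : β'.reverse ~r γ := by simpa using hγr.reverse
    exact hα'.2.not_isRotated_reverse hβ'.2 (hβ'γ.trans hγ.symm)
end

section
/- If o₁o₂⋯o_m is an orientable sequence of order n (with n ≥ 2 and m ≥ 1), then m ≤ 2^{n−1} − 2^{⌊(n−1)/2⌋}. -/
/-! The `m` windows of an orientable sequence and their `m` reversals are `2m` distinct
strings of length `n`, none of which is a palindrome (a palindromic window would equal its own
reversal). Hence `2m ≤ 2^n - 2^{⌈n/2⌉}`, and halving gives the bound. -/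

section Palindromes

variable {α : Type*}

lemma reverse_append_reverse_take_of_length {n : ℕ} {γ : List α}
    (h : γ.length = (n + 1) / 2) :
    (γ ++ (γ.take (n / 2)).reverse).reverse = γ ++ (γ.take (n / 2)).reverse := by
  have hδ : (γ.drop (n / 2)).length ≤ 1 := by rw [List.length_drop, h]; omega
  have hδrev : (γ.drop (n / 2)).reverse = γ.drop (n / 2) := by
    rcases hd : γ.drop (n / 2) with _ | ⟨a, _ | ⟨b, t⟩⟩
    · rfl
    · rfl
    · simp [hd] at hδ
  nth_rewrite 1 [← List.take_append_drop (n / 2) γ]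
  rw [List.reverse_append, List.reverse_append, List.reverse_reverse, hδrev,
    ← List.append_assoc, List.take_append_drop]

variable (α) [Fintype α]

noncomputable def listsOfLength (n : ℕ) : Finset (List α) :=
  Finset.univ.map ⟨List.Vector.toList (α := α) (n := n), List.Vector.toList_injective⟩

variable {α}

lemma mem_listsOfLength {n : ℕ} {l : List α} : l ∈ listsOfLength α n ↔ l.length = n := by
  simp only [listsOfLength, Finset.mem_map, Finset.mem_univ, true_and,
    Function.Embedding.coeFn_mk]
  exact ⟨fun ⟨v, hv⟩ => hv ▸ v.2, fun h => ⟨⟨l, h⟩, rfl⟩⟩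

lemma card_listsOfLength (n : ℕ) : (listsOfLength α n).card = Fintype.card α ^ n := by
  rw [listsOfLength, Finset.card_map, Finset.card_univ, card_vector]

variable [DecidableEq α]

/-- A palindrome of length `n` is determined by its first `⌈n/2⌉` letters. -/
lemma card_palindromes (n : ℕ) :
    ((listsOfLength α n).filter (fun l => l.reverse = l)).card =
      Fintype.card α ^ ((n + 1) / 2) := by
  rw [← card_listsOfLength]
  refine Finset.card_bij' (fun p _ => p.take ((n + 1) / 2))
    (fun γ _ => γ ++ (γ.take (n / 2)).reverse) ?_ ?_ ?_ ?_
  · intro p hp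
    rw [Finset.mem_filter, mem_listsOfLength] at hp
    rw [mem_listsOfLength, List.length_take, hp.1]
    omega
  · intro γ hγ
    rw [mem_listsOfLength] at hγ
    rw [Finset.mem_filter, mem_listsOfLength, List.length_append, List.length_reverse,
      List.length_take, hγ]
    exact ⟨by omega, reverse_append_reverse_take_of_length hγ⟩
  · intro p hp
    obtain ⟨hlen, hpal⟩ := (Finset.mem_filter.1 hp).imp_left mem_listsOfLength.1
    rw [List.take_take, Nat.min_eq_left (by omega), List.reverse_take, hpal, hlen,
      show n - n / 2 = (n + 1) / 2 by omega, List.take_append_drop]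
  · intro γ hγ
    rw [← mem_listsOfLength.1 hγ, List.take_left]

lemma card_nonPalindromes (n : ℕ) :
    ((listsOfLength α n).filter (fun l => l.reverse ≠ l)).card =
      Fintype.card α ^ n - Fintype.card α ^ ((n + 1) / 2) := by
  simp only [ne_eq]
  rw [← card_listsOfLength, ← card_palindromes,
    ← Finset.card_filter_add_card_filter_not (s := listsOfLength α n)
      (p := fun l => l.reverse = l)]
  omega

end Palindromes

section Orientable

variable {n : ℕ} {o : List Bool}

def windows (o : List Bool) (n : ℕ) : Finset (List Bool) :=
  (Finset.range o.length).image (cycWin o n)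

lemma length_cycWin (i : ℕ) : (cycWin o n i).length = n := by
  simp [cycWin]

lemma IsOS.card_windows (hos : IsOS n o) : (windows o n).card = o.length := by
  rw [windows, Finset.card_image_of_injOn, Finset.card_range]
  intro i hi j hj h
  exact (hos i (Finset.mem_range.1 hi) j (Finset.mem_range.1 hj)).1 h

lemma IsOS.disjoint_windows_reverse (hos : IsOS n o) :
    Disjoint (windows o n) ((windows o n).image List.reverse) := by
  simp only [Finset.disjoint_left, windows, Finset.mem_image, Finset.mem_range]
  rintro _ ⟨i, hi, rfl⟩ ⟨_, ⟨j, hj, rfl⟩, hij⟩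
  exact (hos i hi j hj).2 hij.symm

lemma IsOS.windows_union_reverse_subset (hos : IsOS n o) :
    windows o n ∪ (windows o n).image List.reverse ⊆
      (listsOfLength Bool n).filter (fun l => l.reverse ≠ l) := by
  have hwin : ∀ w ∈ windows o n, w.length = n ∧ w.reverse ≠ w := by
    simp only [windows, Finset.mem_image, Finset.mem_range]
    rintro _ ⟨i, hi, rfl⟩
    exact ⟨length_cycWin i, fun h => (hos i hi i hi).2 h.symm⟩
  intro w hw
  rw [Finset.mem_filter, mem_listsOfLength]
  rcases Finset.mem_union.1 hw with hw | hw
  · exact hwin w hw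
  · obtain ⟨v, hv, rfl⟩ := Finset.mem_image.1 hw
    rw [List.length_reverse, List.reverse_reverse]
    exact ⟨(hwin v hv).1, fun h => (hwin v hv).2 h.symm⟩

lemma IsOS.two_mul_length_le (hos : IsOS n o) :
    2 * o.length ≤ 2 ^ n - 2 ^ ((n + 1) / 2) := by
  have hcard := Finset.card_le_card hos.windows_union_reverse_subset
  rwa [Finset.card_union_of_disjoint hos.disjoint_windows_reverse,
    Finset.card_image_of_injective _ List.reverse_injective, hos.card_windows,
    card_nonPalindromes, Fintype.card_bool, ← two_mul] at hcard

end Orientable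

theorem orientable_upper_bound_general (n m : ℕ) (hn : 2 ≤ n) (o : List Bool)
    (hm : o.length = m) (hos : IsOS n o) :
    m ≤ 2 ^ (n - 1) - 2 ^ ((n - 1) / 2) := by
  obtain ⟨k, rfl⟩ : ∃ k, n = k + 1 := ⟨n - 1, by omega⟩
  have h := hos.two_mul_length_le
  rw [show (k + 1 + 1) / 2 = k / 2 + 1 by omega, pow_succ, pow_succ, hm] at h
  simp only [Nat.add_sub_cancel, ← Nat.sub_mul] at h ⊢
  omega

/-- If `o₁⋯o_m` is an orientable sequence of order `n` (`n ≥ 2`, `m ≥ 1`),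
then `m ≤ 2^{n-1} - 2^{⌊(n-1)/2⌋}`. -/
theorem orientable_upper_bound (n m : ℕ) (hn : 2 ≤ n) (o : List Bool)
    (hm : o.length = m) (hm1 : 1 ≤ m) (hos : IsOS n o) :
    m ≤ 2 ^ (n - 1) - 2 ^ ((n - 1) / 2) :=
  orientable_upper_bound_general n m hn o hm hos
end
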